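/- Fix κ ≥ 1, r = (r_1,…,r_κ) ∈ ℂ^κ with Re r_i > 0 for all i, real numbers s > 0, R > 1, 𝒦 ≥ 0, λ ∈ ℂ with Re λ ≥ 0, and an integer j ≥ 1. For m ∈ ℤ₊^κ write |m| = m_1+…+m_κ and ⟨m,r⟩ = m_1 r_1+…+m_κ r_κ; for a complex polynomial C(t) = Σ_i a_i t^i set ‖C‖_R = Σ_i |a_i| R^i, and let H^j be the set of families η = (C_m)_{m ∈ ℤ₊^κ∖{0}} of polynomials with deg C_m ≤ 𝒦|m| and ‖η‖_j := Σ_m (|λ+⟨m,r⟩| + 𝒦|m|)^j / |Γ(⟨m,r⟩/s)| · ‖C_m‖_R < ∞. Then the linear map sending η = (C_m) to the family ((λ+⟨m,r⟩)·C_m + dC_m/dt)_m maps H^j into H^{j−1}, preserves the degree bounds deg ≤ 𝒦|m|, and satisfies ‖((λ+⟨m,r⟩)C_m + C_m')_m‖_{j−1} ≤ ‖η‖_j. -/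

import Mathlib

/-- The weighted `ℓ¹`-norm on complex polynomials. -/
noncomputable def normR (R : ℝ) (C : Polynomial ℂ) : ℝ :=
  ∑ i ∈ C.support, ‖C.coeff i‖ * R ^ i

/-- `|m| = m_1 + … + m_κ` for a multi-index `m`. -/
def msize {κ : ℕ} (m : Fin κ → ℕ) : ℕ := ∑ i, m i

/-- `⟨m,r⟩ = m_1 r_1 + … + m_κ r_κ`. -/
noncomputable def mdot {κ : ℕ} (r : Fin κ → ℂ) (m : Fin κ → ℕ) : ℂ := ∑ i, (m i : ℂ) * r i

/-- The Gamma-weighted norm `‖η‖_j`. -/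
noncomputable def normJ {κ : ℕ} (r : Fin κ → ℂ) (s R 𝒦 : ℝ) (lam : ℂ) (j : ℕ)
    (η : (Fin κ → ℕ) → Polynomial ℂ) : ℝ :=
  ∑' m : {m : Fin κ → ℕ // m ≠ 0},
    (‖lam + mdot r m.1‖ + 𝒦 * msize m.1) ^ j /
      ‖Complex.Gamma (mdot r m.1 / (s : ℂ))‖ * normR R (η m.1)

/-- Membership in the space `H^j`. -/
def memHJ {κ : ℕ} (r : Fin κ → ℂ) (s R 𝒦 : ℝ) (lam : ℂ) (j : ℕ)
    (η : (Fin κ → ℕ) → Polynomial ℂ) : Prop :=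
  η 0 = 0 ∧ (∀ m : Fin κ → ℕ, ((η m).natDegree : ℝ) ≤ 𝒦 * msize m) ∧
  Summable (fun m : {m : Fin κ → ℕ // m ≠ 0} =>
    (‖lam + mdot r m.1‖ + 𝒦 * msize m.1) ^ j /
      ‖Complex.Gamma (mdot r m.1 / (s : ℂ))‖ * normR R (η m.1))

/-!
Coefficientwise, `‖(a + d/dt) C‖_R ≤ (|a| + deg C) ‖C‖_R` for `R ≥ 1`, since differentiating
multiplies the coefficient of `t^(i+1)` by `i + 1 ≤ deg C` and moves it to the smaller weight `R^i`.
With `a = λ + ⟨m,r⟩` and `deg C_m ≤ 𝒦|m|` this factor is exactly the one by which the weight of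
`H^j` exceeds that of `H^{j-1}`, so the estimate holds term by term.
-/

open Polynomial

lemma normR_nonneg {R : ℝ} (hR : 0 ≤ R) (C : ℂ[X]) : 0 ≤ normR R C :=
  Finset.sum_nonneg fun i _ => mul_nonneg (norm_nonneg _) (pow_nonneg hR i)

lemma normR_eq_sum_of_support_subset (R : ℝ) {C : ℂ[X]} {s : Finset ℕ} (h : C.support ⊆ s) :
    normR R C = ∑ i ∈ s, ‖C.coeff i‖ * R ^ i :=
  Finset.sum_subset h fun i _ hi => by simp [notMem_support_iff.mp hi]

lemma normR_add_le {R : ℝ} (hR : 0 ≤ R) (P Q : ℂ[X]) :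
    normR R (P + Q) ≤ normR R P + normR R Q := by
  rw [normR_eq_sum_of_support_subset R support_add,
    normR_eq_sum_of_support_subset R (Finset.subset_union_left (s₂ := Q.support)),
    normR_eq_sum_of_support_subset R (Finset.subset_union_right (s₁ := P.support)),
    ← Finset.sum_add_distrib]
  gcongr with i
  rw [coeff_add, ← add_mul]
  gcongr
  exact norm_add_le _ _

lemma normR_C_mul (R : ℝ) (a : ℂ) (P : ℂ[X]) : normR R (C a * P) = ‖a‖ * normR R P := by
  rw [← smul_eq_C_mul, normR_eq_sum_of_support_subset R (support_smul a P), normR,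
    Finset.mul_sum]
  simp only [coeff_smul, smul_eq_mul, norm_mul, mul_assoc]

lemma normR_derivative_le {R : ℝ} (hR : 1 ≤ R) (P : ℂ[X]) :
    normR R (derivative P) ≤ P.natDegree * normR R P := by
  set n := P.natDegree
  have hsupp : (derivative P).support ⊆ Finset.range n := fun i hi =>
    Finset.mem_range.mpr <| (le_natDegree_of_mem_supp i hi).trans_lt <|
      natDegree_derivative_lt fun h0 => by simp [derivative_of_natDegree_zero h0] at hi
  rw [normR_eq_sum_of_support_subset R hsupp,
    normR_eq_sum_of_support_subset R (supp_subset_range_natDegree_succ (p := P)),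
    Finset.sum_range_succ', mul_add, Finset.mul_sum]
  have hzero : 0 ≤ (n : ℝ) * (‖P.coeff 0‖ * R ^ 0) := by positivity
  refine le_add_of_le_of_nonneg (Finset.sum_le_sum fun i hmem => ?_) hzero
  have hi : ((i + 1 : ℕ) : ℝ) ≤ n := by exact_mod_cast Finset.mem_range.mp hmem
  rw [coeff_derivative, norm_mul, ← Nat.cast_succ, Complex.norm_natCast, mul_comm ‖_‖, mul_assoc]
  exact mul_le_mul hi (mul_le_mul_of_nonneg_left (pow_le_pow_right₀ hR i.le_succ) (norm_nonneg _))
    (by positivity) (by positivity)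

lemma normR_C_mul_add_derivative_le {R : ℝ} (hR : 1 ≤ R) (a : ℂ) {P : ℂ[X]} {D : ℝ}
    (hD : (P.natDegree : ℝ) ≤ D) :
    normR R (C a * P + derivative P) ≤ (‖a‖ + D) * normR R P := by
  have hP := normR_nonneg (zero_le_one.trans hR) P
  calc normR R (C a * P + derivative P)
      ≤ ‖a‖ * normR R P + P.natDegree * normR R P := by
        rw [← normR_C_mul]
        exact normR_add_le (zero_le_one.trans hR) _ _ |>.trans
          (add_le_add_right (normR_derivative_le hR P) _)
    _ ≤ (‖a‖ + D) * normR R P := by rw [add_mul]; gcongr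

lemma natDegree_C_mul_add_derivative_le (a : ℂ) (P : ℂ[X]) :
    (C a * P + derivative P).natDegree ≤ P.natDegree :=
  (natDegree_add_le _ _).trans <| max_le (natDegree_C_mul_le a P) <|
    (natDegree_derivative_le P).trans (Nat.sub_le _ _)

lemma pow_pred_div_mul_le_pow_div_mul {W G x y : ℝ} {j : ℕ} (hj : 1 ≤ j) (hW : 0 ≤ W)
    (hG : 0 ≤ G) (hxy : x ≤ W * y) : W ^ (j - 1) / G * x ≤ W ^ j / G * y := by
  obtain ⟨k, rfl⟩ := Nat.exists_eq_add_of_le' hj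
  calc W ^ (k + 1 - 1) / G * x ≤ W ^ k / G * (W * y) := by simp only [Nat.add_sub_cancel]; gcongr
    _ = W ^ (k + 1) / G * y := by ring

theorem euler_operator_continuous_general (κ : ℕ) (r : Fin κ → ℂ)
    (s R 𝒦 : ℝ) (hR : 1 < R) (h𝒦 : 0 ≤ 𝒦)
    (lam : ℂ) (j : ℕ) (hj : 1 ≤ j)
    (η : (Fin κ → ℕ) → Polynomial ℂ) (hη : memHJ r s R 𝒦 lam j η) :
    memHJ r s R 𝒦 lam (j - 1)
      (fun m => Polynomial.C (lam + mdot r m) * η m + Polynomial.derivative (η m)) ∧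
    normJ r s R 𝒦 lam (j - 1)
      (fun m => Polynomial.C (lam + mdot r m) * η m + Polynomial.derivative (η m)) ≤
      normJ r s R 𝒦 lam j η := by
  obtain ⟨hzero, hdeg, hsum⟩ := hη
  have hR0 : 0 ≤ R := zero_le_one.trans hR.le
  have hweight (m : Fin κ → ℕ) : 0 ≤ ‖lam + mdot r m‖ + 𝒦 * msize m := by positivity
  have hle (m : {m : Fin κ → ℕ // m ≠ 0}) :=
    pow_pred_div_mul_le_pow_div_mul hj (hweight m.1)
      (norm_nonneg (Complex.Gamma (mdot r m.1 / (s : ℂ))))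
      (normR_C_mul_add_derivative_le hR.le (lam + mdot r m.1) (hdeg m.1))
  have hsum' := Summable.of_nonneg_of_le (fun m => ?nonneg) hle hsum
  case nonneg =>
    exact mul_nonneg (div_nonneg (pow_nonneg (hweight m.1) _) (norm_nonneg _)) (normR_nonneg hR0 _)
  refine ⟨⟨by simp [hzero], fun m => ?_, hsum'⟩, hsum'.tsum_le_tsum hle hsum⟩
  exact le_trans (by exact_mod_cast natDegree_C_mul_add_derivative_le _ _) (hdeg m)

/-- The shifted Euler operator `λ + δ̂`, acting coefficientwise by
`C_m ↦ (λ+⟨m,r⟩)·C_m + dC_m/dt`, maps `H^j` continuously into `H^{j−1}` with norm `≤ 1`. -/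
theorem euler_operator_continuous (κ : ℕ) (hκ : 1 ≤ κ) (r : Fin κ → ℂ)
    (hr : ∀ i, 0 < (r i).re) (s R 𝒦 : ℝ) (hs : 0 < s) (hR : 1 < R) (h𝒦 : 0 ≤ 𝒦)
    (lam : ℂ) (hlam : 0 ≤ lam.re) (j : ℕ) (hj : 1 ≤ j)
    (η : (Fin κ → ℕ) → Polynomial ℂ) (hη : memHJ r s R 𝒦 lam j η) :
    memHJ r s R 𝒦 lam (j - 1)
      (fun m => Polynomial.C (lam + mdot r m) * η m + Polynomial.derivative (η m)) ∧
    normJ r s R 𝒦 lam (j - 1)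
      (fun m => Polynomial.C (lam + mdot r m) * η m + Polynomial.derivative (η m)) ≤
      normJ r s R 𝒦 lam j η :=
  euler_operator_continuous_general κ r s R 𝒦 hR h𝒦 lam j hj η hη
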